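/- arXiv:2007.08057 — 2 statements merged into one kernel-verified Lean document; each statement's English description precedes it below -/
import Mathlib

section
/- Let H be a graph with a universal vertex v_0, H' = H − v_0, and let c': V(H') → ℤ≥1 be a cost function satisfying (i) c'(V(H')) ≥ 2ω(H',c') and (ii) OPT(H',c') ≥ ω(H',c') − 1. Then there exists an integer c_0 ≥ 1 such that, extending c' to c on V(H) by c(v_0) = c_0, one has c(V(H)) ≤ 2·OPT(H,c) + 1. -/
variable {V : Type*}

/-- The triple (u,v,w) induces a path on 3 vertices (u - v - w) in G. -/
def IsInducedP3 (G : SimpleGraph V) (u v w : V) : Prop :=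
  u ≠ w ∧ G.Adj u v ∧ G.Adj v w ∧ ¬ G.Adj u w

/-- A cluster graph: every connected component is a complete graph. -/
def IsClusterGraph (G : SimpleGraph V) : Prop :=
  ∀ u v : V, u ≠ v → G.Reachable u v → G.Adj u v

/-- X is a hitting set of G: deleting X leaves a cluster graph. -/
def IsHittingSet (G : SimpleGraph V) (X : Set V) : Prop :=
  IsClusterGraph (G.induce Xᶜ)

/-- Minimum cost of a hitting set. -/
noncomputable def OPT (G : SimpleGraph V) (c : V → ℕ) : ℕ :=
  sInf {n | ∃ X : Finset V, IsHittingSet G ↑X ∧ ∑ v ∈ X, c v = n}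

/-- Maximum weight of a clique. -/
noncomputable def omegaW (G : SimpleGraph V) (c : V → ℕ) : ℕ :=
  sSup {n | ∃ K : Finset V, G.IsClique (↑K : Set V) ∧ ∑ v ∈ K, c v = n}

/-- u and u' are true twins within the induced subgraph on A. -/
def TrueTwinsIn (G : SimpleGraph V) (A : Set V) (u u' : V) : Prop :=
  u ∈ A ∧ u' ∈ A ∧ G.Adj u u' ∧
    ∀ w ∈ A, w ≠ u → w ≠ u' → (G.Adj u w ↔ G.Adj u' w)

/-!
Because `v0` is universal, a hitting set `X` of `H` either contains `v0`, and then `X - v0` is a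
hitting set of `H'`, or it misses `v0`, and then `H - X` is a cluster graph with a universal vertex,
hence a clique, so `X` is `V(H')` minus a clique of `H'`. Hence
`OPT(H,c) ≥ min(c0 + OPT(H',c'), c'(V(H')) - ω(H',c'))`. With
`c0 = max 1 (c'(V(H')) - 2 OPT(H',c') - 1)` the first branch is large enough by the choice of `c0`,
and the second by (i) and (ii).
-/

lemma isHittingSet_univ (G : SimpleGraph V) [Fintype V] :
    IsHittingSet G ↑(Finset.univ : Finset V) := by
  rintro ⟨u, hu⟩
  simp at hu

lemma IsHittingSet.comap {W : Type*} {G : SimpleGraph V} {G' : SimpleGraph W} {X : Set V}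
    (hX : IsHittingSet G X) (f : G' ↪g G) : IsHittingSet G' (f ⁻¹' X) := by
  intro u v huv huv'
  let φ : G'.induce (f ⁻¹' X)ᶜ →g G.induce Xᶜ :=
    { toFun := fun a => ⟨f a, a.2⟩
      map_rel' := f.map_rel_iff.mpr }
  exact f.map_rel_iff.mp <|
    hX _ _ (fun h => huv (Subtype.ext (f.injective (congrArg Subtype.val h)))) (huv'.map φ)

lemma IsHittingSet.isClique_compl {G : SimpleGraph V} {X : Set V} (hX : IsHittingSet G X)
    {v0 : V} (hv0 : v0 ∉ X) (huniv : ∀ v, v ≠ v0 → G.Adj v0 v) : G.IsClique Xᶜ := by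
  have reach_v0 : ∀ u : ↥Xᶜ, (G.induce Xᶜ).Reachable ⟨v0, hv0⟩ u := by
    rintro ⟨u, hu⟩
    by_cases h : u = v0
    · subst h; rfl
    · exact SimpleGraph.Adj.reachable (G := G.induce Xᶜ) (huniv u h)
  intro u hu w hw huw
  exact hX ⟨u, hu⟩ ⟨w, hw⟩ (by simpa using huw) ((reach_v0 _).symm.trans (reach_v0 _))

lemma OPT_le_sum {G : SimpleGraph V} (c : V → ℕ) {X : Finset V} (hX : IsHittingSet G X) :
    OPT G c ≤ ∑ v ∈ X, c v :=
  Nat.sInf_le ⟨X, hX, rfl⟩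

lemma exists_isHittingSet_sum_eq_OPT [Fintype V] (G : SimpleGraph V) (c : V → ℕ) :
    ∃ X : Finset V, IsHittingSet G X ∧ ∑ v ∈ X, c v = OPT G c :=
  Nat.sInf_mem (s := {n | ∃ X : Finset V, IsHittingSet G ↑X ∧ ∑ v ∈ X, c v = n})
    ⟨_, Finset.univ, isHittingSet_univ G, rfl⟩

lemma sum_le_omegaW [Fintype V] {G : SimpleGraph V} (c : V → ℕ) {K : Finset V}
    (hK : G.IsClique (K : Set V)) : ∑ v ∈ K, c v ≤ omegaW G c := by
  refine le_csSup ⟨∑ v, c v, ?_⟩ ⟨K, hK, rfl⟩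
  rintro _ ⟨K', -, rfl⟩
  exact Finset.sum_le_sum_of_subset (Finset.subset_univ K')

section Extension

variable [DecidableEq V] {v0 : V}

def extendCost (v0 : V) (c0 : ℕ) (c' : {v : V // v ≠ v0} → ℕ) : V → ℕ :=
  fun v => if h : v = v0 then c0 else c' ⟨v, h⟩

lemma sum_extendCost (c0 : ℕ) (c' : {v : V // v ≠ v0} → ℕ) (s : Finset V) :
    ∑ v ∈ s, extendCost v0 c0 c' v =
      (if v0 ∈ s then c0 else 0) + ∑ v ∈ s.subtype (· ≠ v0), c' v := by
  have hsub : ∑ v ∈ s.subtype (· ≠ v0), c' v = ∑ v ∈ s.erase v0, extendCost v0 c0 c' v := by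
    rw [← Finset.filter_ne', ← Finset.sum_subtype_eq_sum_filter]
    exact Finset.sum_congr rfl fun v _ => (dif_neg v.2 : extendCost v0 c0 c' v = _).symm
  rw [hsub]
  split_ifs with hv0
  · rw [← Finset.add_sum_erase s _ hv0, extendCost, dif_pos rfl]
  · rw [Finset.erase_eq_of_notMem hv0, zero_add]

lemma sum_univ_extendCost [Fintype V] (c0 : ℕ) (c' : {v : V // v ≠ v0} → ℕ) :
    ∑ v, extendCost v0 c0 c' v = c0 + ∑ v, c' v := by
  rw [sum_extendCost, if_pos (Finset.mem_univ v0), Finset.subtype_univ]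

theorem min_le_OPT_extendCost [Fintype V] {H : SimpleGraph V}
    (huniv : ∀ v, v ≠ v0 → H.Adj v0 v) (c0 : ℕ) (c' : {v : V // v ≠ v0} → ℕ) :
    min (c0 + OPT (H.comap Subtype.val) c')
        (∑ v, c' v - omegaW (H.comap Subtype.val) c') ≤
      OPT H (extendCost v0 c0 c') := by
  obtain ⟨X, hX, hXopt⟩ := exists_isHittingSet_sum_eq_OPT H (extendCost v0 c0 c')
  rw [← hXopt, sum_extendCost]
  set X' := X.subtype (· ≠ v0)
  have hX'_coe : (X' : Set {v : V // v ≠ v0}) = Subtype.val ⁻¹' X := by ext; simp [X']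
  by_cases hv0 : v0 ∈ X
  · have hOPT : OPT (H.comap Subtype.val) c' ≤ ∑ v ∈ X', c' v := by
      refine OPT_le_sum c' ?_
      rw [hX'_coe]
      exact hX.comap (SimpleGraph.Embedding.comap (Function.Embedding.subtype _) H)
    rw [if_pos hv0]
    omega
  · have hclique : (H.comap Subtype.val).IsClique (X'ᶜ : Set {v : V // v ≠ v0}) := by
      intro u hu w hw huw
      refine hX.isClique_compl hv0 huniv ?_ ?_ (Subtype.val_injective.ne huw)
      · simpa [hX'_coe] using hu
      · simpa [hX'_coe] using hw
    have hω := sum_le_omegaW c' (K := X'ᶜ) (by rwa [Finset.coe_compl])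
    have hsplit := Finset.sum_add_sum_compl X' c'
    rw [if_neg hv0]
    omega

end Extension

theorem stmt_6_general [Fintype V] [DecidableEq V] (H : SimpleGraph V) (v0 : V)
    (huniv : ∀ v, v ≠ v0 → H.Adj v0 v)
    (c' : {v : V // v ≠ v0} → ℕ)
    (hi : 2 * omegaW (H.comap (Subtype.val : {v : V // v ≠ v0} → V)) c' ≤ ∑ v, c' v)
    (hii : omegaW (H.comap (Subtype.val : {v : V // v ≠ v0} → V)) c' - 1 ≤
      OPT (H.comap (Subtype.val : {v : V // v ≠ v0} → V)) c') :
    ∃ c0 : ℕ, 1 ≤ c0 ∧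
      (∑ v : V, if h : v = v0 then c0 else c' ⟨v, h⟩) ≤
        2 * OPT H (fun v => if h : v = v0 then c0 else c' ⟨v, h⟩) + 1 := by
  set S := ∑ v, c' v
  set ω := omegaW (H.comap Subtype.val) c'
  set opt' := OPT (H.comap Subtype.val) c'
  set c0 := max 1 (S - 2 * opt' - 1)
  refine ⟨c0, le_max_left _ _, ?_⟩
  change ∑ v, extendCost v0 c0 c' v ≤ 2 * OPT H (extendCost v0 c0 c') + 1
  have hOPT : min (c0 + opt') (S - ω) ≤ OPT H (extendCost v0 c0 c') :=
    min_le_OPT_extendCost huniv c0 c'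
  rw [sum_univ_extendCost]
  omega

/-- Extension lemma: given a cost function c' on H' = H − v₀ with values ≥ 1 satisfying
(i) c'(V(H')) ≥ 2ω(H',c') and (ii) OPT(H',c') ≥ ω(H',c') − 1, there is c₀ ≥ 1 such that
the extension c of c' with c(v₀) = c₀ satisfies c(V(H)) ≤ 2·OPT(H,c) + 1. -/
theorem stmt_6 [Fintype V] [DecidableEq V] (H : SimpleGraph V) (v0 : V)
    (huniv : ∀ v, v ≠ v0 → H.Adj v0 v)
    (c' : {v : V // v ≠ v0} → ℕ) (hpos : ∀ v, 1 ≤ c' v)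
    (hi : 2 * omegaW (H.comap (Subtype.val : {v : V // v ≠ v0} → V)) c' ≤ ∑ v, c' v)
    (hii : omegaW (H.comap (Subtype.val : {v : V // v ≠ v0} → V)) c' - 1 ≤
      OPT (H.comap (Subtype.val : {v : V // v ≠ v0} → V)) c') :
    ∃ c0 : ℕ, 1 ≤ c0 ∧
      (∑ v : V, if h : v = v0 then c0 else c' ⟨v, h⟩) ≤
        2 * OPT H (fun v => if h : v = v0 then c0 else c' ⟨v, h⟩) + 1 :=
  stmt_6_general H v0 huniv c' hi hii
end

section
/- Let G be a graph, v_0 a vertex whose neighborhood N(v_0) = {v_1, …, v_k} is a stable set of size k ≥ 1, and let H be the star induced by {v_0, v_1, …, v_k}. Define c(v_0) = k − 1 and c(v_i) = 1 for i = 1, …, k. Then every hitting set X of H satisfies c(X) ≥ k − 1; i.e., the star inequality (k−1)x_{v_0} + Σ_{i=1}^k x_{v_i} ≥ k − 1 is valid for the hitting set polytope of H. -/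
/- A hitting set meets every induced P₃, and in the star these are the paths
`a - v₀ - b` between distinct leaves.  So a hitting set either contains `v₀`, of cost `k - 1`,
or misses at most one leaf, hence contains at least `k - 1` leaves of cost `1`. -/

variable {V : Type*}

theorem IsHittingSet.mem_of_isInducedP3 {G : SimpleGraph V} {X : Set V} (hX : IsHittingSet G X)
    {u v w : V} (h : IsInducedP3 G u v w) : u ∈ X ∨ v ∈ X ∨ w ∈ X := by
  obtain ⟨huw, huv, hvw, hnuw⟩ := h
  by_contra! hout
  obtain ⟨hu, hv, hw⟩ := hout
  have huv' : (G.induce Xᶜ).Adj ⟨u, hu⟩ ⟨v, hv⟩ := huv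
  have hvw' : (G.induce Xᶜ).Adj ⟨v, hv⟩ ⟨w, hw⟩ := hvw
  exact hnuw (hX _ _ (fun h => huw (congrArg Subtype.val h)) (huv'.reachable.trans hvw'.reachable))

theorem IsHittingSet.card_compl_le_two_of_star [Fintype V] [DecidableEq V]
    {G : SimpleGraph V} {X : Finset V} (hX : IsHittingSet G ↑X) {v0 : V} (hv0 : v0 ∉ X)
    (hcenter : ∀ w, w ≠ v0 → G.Adj v0 w) (hstable : ∀ a b : V, a ≠ v0 → b ≠ v0 → ¬ G.Adj a b) :
    Xᶜ.card ≤ 2 := by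
  have hleaves : (Xᶜ.erase v0).card ≤ 1 := by
    refine Finset.card_le_one.mpr fun a ha b hb => ?_
    simp only [Finset.mem_erase, Finset.mem_compl] at ha hb
    by_contra hab
    have hP3 : IsInducedP3 G a v0 b :=
      ⟨hab, (hcenter a ha.1).symm, hcenter b hb.1, hstable a b ha.1 hb.1⟩
    simpa [ha.2, hv0, hb.2] using hX.mem_of_isInducedP3 hP3
  have := Finset.card_erase_add_one (Finset.mem_compl.mpr hv0)
  omega

theorem stmt_17_general [Fintype V] [DecidableEq V] (G : SimpleGraph V) (v0 : V) (k : ℕ)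
    (hcard : Fintype.card V = k + 1)
    (hcenter : ∀ w, w ≠ v0 → G.Adj v0 w)
    (hstable : ∀ a b : V, a ≠ v0 → b ≠ v0 → ¬ G.Adj a b)
    (c : V → ℕ) (hc0 : c v0 = k - 1) (hc1 : ∀ w, w ≠ v0 → c w = 1) :
    ∀ X : Finset V, IsHittingSet G ↑X → k - 1 ≤ ∑ w ∈ X, c w := by
  intro X hX
  by_cases hv0 : v0 ∈ X
  · exact hc0 ▸ Finset.single_le_sum (fun _ _ => Nat.zero_le _) hv0
  · have hcost : ∑ w ∈ X, c w = X.card * 1 :=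
      Finset.sum_const_nat fun w hw => hc1 w (ne_of_mem_of_not_mem hw hv0)
    have hcompl := hX.card_compl_le_two_of_star hv0 hcenter hstable
    rw [Finset.card_compl] at hcompl
    omega

/-- Star inequality: in the star K_{1,k} with center v₀ (cost k − 1) and k leaves
(cost 1 each), every hitting set has cost at least k − 1. -/
theorem stmt_17 [Fintype V] [DecidableEq V] (G : SimpleGraph V) (v0 : V) (k : ℕ)
    (hk : 1 ≤ k) (hcard : Fintype.card V = k + 1)
    (hcenter : ∀ w, w ≠ v0 → G.Adj v0 w)
    (hstable : ∀ a b : V, a ≠ v0 → b ≠ v0 → ¬ G.Adj a b)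
    (c : V → ℕ) (hc0 : c v0 = k - 1) (hc1 : ∀ w, w ≠ v0 → c w = 1) :
    ∀ X : Finset V, IsHittingSet G ↑X → k - 1 ≤ ∑ w ∈ X, c w :=
  stmt_17_general G v0 k hcard hcenter hstable c hc0 hc1
end
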